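/- Let (𝒵, P_Z) be a probability space, 𝒴 a measurable space, and for two parameters θ, θ* let z ↦ p_θ(·|z) and z ↦ p_{θ*}(·|z) be probability kernels from 𝒵 to 𝒴, with p̄_θ := ∫ p_θ(·|z) dP_Z(z). Assume: (i) there is a probability measure p* on 𝒴 with p_{θ*}(·|z) = p* for P_Z-almost every z; and (ii) there is C ≥ 1 such that for P_Z-almost every z, p_θ(·|z) ≪ p̄_θ with dp_θ(·|z)/dp̄_θ ≤ C p̄_θ-almost everywhere. Then I_θ := ∫ KL(p_θ(·|z) ‖ p̄_θ) dP_Z(z) ≤ 4·M_C·sup_{z ∈ 𝒵} TV(p_θ(·|z), p_{θ*}(·|z)). -/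

import Mathlib

open MeasureTheory

/-- Kullback–Leibler divergence `KL(p‖q) := ∫ (dp/dq) log(dp/dq) dq`. -/
noncomputable def KL {Y : Type*} [MeasurableSpace Y] (p q : Measure Y) : ℝ :=
  ∫ y, (p.rnDeriv q y).toReal * Real.log (p.rnDeriv q y).toReal ∂q

/-- Total variation distance `TV(p, q) := sup_{A measurable} |p(A) - q(A)|`. -/
noncomputable def TV {Y : Type*} [MeasurableSpace Y] (p q : Measure Y) : ℝ :=
  ⨆ A : {A : Set Y // MeasurableSet A}, |(p A).toReal - (q A).toReal|

/-- `M_C := max 1 ((C log C - C + 1)/(C - 1))` for `C > 1`; for `C = 1` Lean's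
convention `x / 0 = 0` gives `MC 1 = 1 = M_1`. -/
noncomputable def MC (C : ℝ) : ℝ := max 1 ((C * Real.log C - C + 1) / (C - 1))

/-!
With `f = dp_θ(·|z)/dp̄_θ ∈ [0, C]`, the KL divergence is `∫ klFun ∘ f dp̄_θ` where
`klFun t = t log t + 1 - t`. By convexity, `klFun t ≤ M_C |t - 1|` on `[0, C]`, and
`∫ |f - 1| dp̄_θ = 2 (p_θ(·|z)(A) - p̄_θ(A))` for `A = {f > 1}`, so `KL ≤ 2 M_C TV(p_θ(·|z), p̄_θ)`.
Finally, `TV(p_θ(·|z), p̄_θ) ≤ TV(p_θ(·|z), p*) + TV(p*, p̄_θ)`, and the second term is at most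
the supremum `S` of the first because `p̄_θ` is a mixture of the `p_θ(·|z)`.
-/

open InformationTheory Set

lemma one_le_MC (C : ℝ) : 1 ≤ MC C := le_max_left _ _

lemma MC_nonneg (C : ℝ) : 0 ≤ MC C := zero_le_one.trans (one_le_MC C)

lemma klFun_le_MC_mul_abs_sub_one {C t : ℝ} (ht0 : 0 ≤ t) (htC : t ≤ C) :
    klFun t ≤ MC C * |t - 1| := by
  rcases lt_trichotomy t 1 with ht1 | rfl | ht1
  · calc klFun t ≤ 1 - t := by rw [klFun_apply]; linarith [Real.mul_log_nonpos ht0 ht1.le]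
      _ ≤ MC C * |t - 1| := by
        rw [abs_of_neg (by linarith)]; nlinarith [one_le_MC C]
  · simp [klFun_one]
  · -- slopes of secants of the convex function `klFun` through `(1, 0)` increase
    have hslope : klFun t / (t - 1) ≤ klFun C / (C - 1) := by
      simpa [klFun_one] using convexOn_klFun.secant_mono (a := 1) (by simp) ht0
        (by simp; linarith) ht1.ne' (by linarith) htC
    have hMC : klFun C / (C - 1) ≤ MC C := by
      rw [klFun_apply]; exact le_of_eq_of_le (by ring_nf) (le_max_right _ _)
    rw [abs_of_pos (sub_pos.2 ht1)]
    exact (div_le_iff₀ (sub_pos.2 ht1)).1 (hslope.trans hMC)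

section TV

variable {Y : Type*} [MeasurableSpace Y] (p q r : Measure Y)
  [IsProbabilityMeasure p] [IsProbabilityMeasure q] [IsProbabilityMeasure r]

lemma abs_measure_toReal_sub_le_one (A : Set Y) : |(p A).toReal - (q A).toReal| ≤ 1 :=
  abs_sub_le_of_nonneg_of_le ENNReal.toReal_nonneg measureReal_le_one
    ENNReal.toReal_nonneg measureReal_le_one

lemma TV_le_one : TV p q ≤ 1 :=
  Real.iSup_le (fun A => abs_measure_toReal_sub_le_one p q A) zero_le_one

lemma le_TV {A : Set Y} (hA : MeasurableSet A) : |(p A).toReal - (q A).toReal| ≤ TV p q :=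
  le_ciSup (f := fun A : {A : Set Y // MeasurableSet A} => |(p A).toReal - (q A).toReal|)
    ⟨1, by rintro _ ⟨A, rfl⟩; exact abs_measure_toReal_sub_le_one p q A⟩ ⟨A, hA⟩

lemma TV_nonneg : 0 ≤ TV p q := (abs_nonneg _).trans (le_TV p q .empty)

lemma TV_triangle : TV p r ≤ TV p q + TV q r :=
  Real.iSup_le (fun A => (abs_sub_le _ _ _).trans (add_le_add (le_TV p q A.2) (le_TV q r A.2)))
    (add_nonneg (TV_nonneg p q) (TV_nonneg q r))

end TV

section KL

variable {Y : Type*} [MeasurableSpace Y] {p q : Measure Y}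

lemma KL_eq_integral_klFun [IsFiniteMeasure p] [IsFiniteMeasure q] (hpq : p ≪ q)
    (hmass : p univ = q univ) : KL p q = ∫ y, klFun (p.rnDeriv q y).toReal ∂q := by
  set f := fun y => (p.rnDeriv q y).toReal
  have hf : Integrable f q := Measure.integrable_toReal_rnDeriv
  have hlin : Integrable (fun y => 1 - f y) q := (integrable_const 1).sub hf
  have hlin0 : ∫ y, (1 - f y) ∂q = 0 := by
    rw [integral_sub (integrable_const 1) hf, Measure.integral_toReal_rnDeriv hpq]
    simp [measureReal_def, hmass]
  have hkl : (fun y => klFun (f y)) = fun y => f y * Real.log (f y) + (1 - f y) := by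
    ext y; rw [klFun_apply]; ring
  rw [hkl]
  by_cases hint : Integrable (fun y => f y * Real.log (f y)) q
  · rw [integral_add hint hlin, hlin0, add_zero]; rfl
  · rw [KL, integral_undef hint, integral_undef]
    exact fun h => hint ((integrable_add_iff_integrable_left' hlin).1 h)


lemma integral_abs_rnDeriv_sub_one_le_two_mul_TV [IsProbabilityMeasure p] [IsProbabilityMeasure q]
    (hpq : p ≪ q) : ∫ y, |(p.rnDeriv q y).toReal - 1| ∂q ≤ 2 * TV p q := by
  set g := fun y => (p.rnDeriv q y).toReal - 1
  set A := {y | 0 < g y}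
  have hA : MeasurableSet A := measurableSet_lt measurable_const (by fun_prop)
  have hg : Integrable g q := Measure.integrable_toReal_rnDeriv.sub (integrable_const 1)
  have hgA : Integrable (A.indicator g) q := hg.indicator hA
  have habs : (fun y => |g y|) = fun y => 2 * A.indicator g y - g y := by
    ext y
    by_cases hy : y ∈ A
    · rw [indicator_of_mem hy, abs_of_pos hy]; ring
    · rw [indicator_of_notMem hy, abs_of_nonpos (not_lt.1 hy)]; ring
  have hg0 : ∫ y, g y ∂q = 0 := by
    rw [integral_sub Measure.integrable_toReal_rnDeriv (integrable_const 1),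
      Measure.integral_toReal_rnDeriv hpq]
    simp
  have hgA_eq : ∫ y, A.indicator g y ∂q = (p A).toReal - (q A).toReal := by
    rw [integral_indicator hA, integral_sub Measure.integrable_toReal_rnDeriv.integrableOn
      (integrableOn_const (measure_ne_top q A)), Measure.setIntegral_toReal_rnDeriv hpq A]
    simp [measureReal_def]
  rw [habs, integral_sub (hgA.const_mul 2) hg, integral_const_mul, hg0, hgA_eq, sub_zero]
  exact mul_le_mul_of_nonneg_left ((le_abs_self _).trans (le_TV p q hA)) zero_le_two

lemma KL_le_two_mul_MC_mul_TV [IsProbabilityMeasure p] [IsProbabilityMeasure q] (hpq : p ≪ q)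
    {C : ℝ} (hC : 0 ≤ C) (hbound : ∀ᵐ y ∂q, p.rnDeriv q y ≤ ENNReal.ofReal C) :
    KL p q ≤ 2 * MC C * TV p q := by
  have hpoint : ∀ᵐ y ∂q,
      klFun (p.rnDeriv q y).toReal ≤ MC C * |(p.rnDeriv q y).toReal - 1| :=
    hbound.mono fun y hy =>
      klFun_le_MC_mul_abs_sub_one ENNReal.toReal_nonneg (ENNReal.toReal_le_of_le_ofReal hC hy)
  calc KL p q = ∫ y, klFun (p.rnDeriv q y).toReal ∂q := KL_eq_integral_klFun hpq (by simp)
    _ ≤ ∫ y, MC C * |(p.rnDeriv q y).toReal - 1| ∂q :=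
      integral_mono_of_nonneg (ae_of_all _ fun y => klFun_nonneg ENNReal.toReal_nonneg)
        ((Measure.integrable_toReal_rnDeriv.sub (integrable_const 1)).abs.const_mul _) hpoint
    _ = MC C * ∫ y, |(p.rnDeriv q y).toReal - 1| ∂q := integral_const_mul _ _
    _ ≤ MC C * (2 * TV p q) := by
      exact mul_le_mul_of_nonneg_left (integral_abs_rnDeriv_sub_one_le_two_mul_TV hpq) (MC_nonneg C)
    _ = 2 * MC C * TV p q := by ring

end KL

lemma TV_bind_le {Z Y : Type*} [MeasurableSpace Z] [MeasurableSpace Y]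
    {μ : Measure Z} [IsProbabilityMeasure μ] {κ : Z → Measure Y} (hκ : Measurable κ)
    (hκprob : ∀ z, IsProbabilityMeasure (κ z)) (r : Measure Y) [IsProbabilityMeasure r]
    {S : ℝ} (hS : ∀ᵐ z ∂μ, TV (κ z) r ≤ S) : TV r (μ.bind κ) ≤ S := by
  obtain ⟨z₀, hz₀⟩ := hS.exists
  refine Real.iSup_le (fun ⟨A, hA⟩ => ?_) ((TV_nonneg _ _).trans hz₀)
  have hκA : Measurable fun z => κ z A := (Measure.measurable_coe hA).comp hκ
  have hint : Integrable (fun z => (κ z A).toReal) μ :=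
    .of_bound hκA.ennreal_toReal.aestronglyMeasurable 1 (ae_of_all _ fun z => by
      rw [Real.norm_of_nonneg ENNReal.toReal_nonneg]; exact measureReal_le_one)
  have hbind : (μ.bind κ A).toReal = ∫ z, (κ z A).toReal ∂μ := by
    rw [Measure.bind_apply hA hκ.aemeasurable, integral_toReal hκA.aemeasurable (ae_of_all _ fun z => measure_lt_top _ _)]
  calc |(r A).toReal - (μ.bind κ A).toReal|
      = ‖∫ z, ((κ z A).toReal - (r A).toReal) ∂μ‖ := by
        rw [hbind, integral_sub hint (integrable_const _), integral_const, Real.norm_eq_abs,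
          abs_sub_comm]
        simp
    _ ≤ S * μ.real univ := norm_integral_le_of_norm_le_const
        (hS.mono fun z hz => (le_TV (κ z) r hA).trans hz)
    _ = S := by simp

theorem stmt6_general {Z Y : Type*} [MeasurableSpace Z] [MeasurableSpace Y]
    (PZ : Measure Z) [IsProbabilityMeasure PZ]
    (pθ pθs : Z → Measure Y) (hθ : Measurable pθ)
    (hθprob : ∀ z, IsProbabilityMeasure (pθ z))
    (hθsprob : ∀ z, IsProbabilityMeasure (pθs z))
    (pstar : Measure Y) [IsProbabilityMeasure pstar]
    (h1 : ∀ᵐ z ∂PZ, pθs z = pstar)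
    (C : ℝ) (hC : 1 ≤ C)
    (h2 : ∀ᵐ z ∂PZ, pθ z ≪ PZ.bind pθ ∧
        ∀ᵐ y ∂(PZ.bind pθ), (pθ z).rnDeriv (PZ.bind pθ) y ≤ ENNReal.ofReal C) :
    ∫ z, KL (pθ z) (PZ.bind pθ) ∂PZ ≤ 4 * MC C * ⨆ z, TV (pθ z) (pθs z) := by
  set S := ⨆ z, TV (pθ z) (pθs z)
  have : IsProbabilityMeasure (PZ.bind pθ) :=
    isProbabilityMeasure_bind hθ.aemeasurable (ae_of_all _ hθprob)
  have hTV_star : ∀ᵐ z ∂PZ, TV (pθ z) pstar ≤ S := h1.mono fun z hz => by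
    rw [← hz]
    exact le_ciSup (f := fun z => TV (pθ z) (pθs z))
      ⟨1, by rintro _ ⟨z, rfl⟩; exact TV_le_one (pθ z) (pθs z)⟩ z
  have hTV_mix : TV pstar (PZ.bind pθ) ≤ S := TV_bind_le hθ hθprob pstar hTV_star
  have hKL : ∀ᵐ z ∂PZ, KL (pθ z) (PZ.bind pθ) ≤ 4 * MC C * S := by
    filter_upwards [h2, hTV_star] with z ⟨hac, hbound⟩ hz
    calc KL (pθ z) (PZ.bind pθ) ≤ 2 * MC C * TV (pθ z) (PZ.bind pθ) :=
          KL_le_two_mul_MC_mul_TV hac (by linarith) hbound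
      _ ≤ 2 * MC C * (TV (pθ z) pstar + TV pstar (PZ.bind pθ)) :=
          mul_le_mul_of_nonneg_left (TV_triangle _ _ _) (by linarith [MC_nonneg C])
      _ ≤ 4 * MC C * S := by nlinarith [MC_nonneg C]
  have hS : 0 ≤ 4 * MC C * S := by
    obtain ⟨z, hz⟩ := hTV_star.exists
    have := MC_nonneg C
    have := (TV_nonneg (pθ z) pstar).trans hz
    positivity
  by_cases hint : Integrable (fun z => KL (pθ z) (PZ.bind pθ)) PZ
  · simpa using integral_mono_ae hint (integrable_const _) hKL
  · rwa [integral_undef hint]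

/-- for probability kernels `z ↦ p_θ(·|z)` and `z ↦ p_{θ*}(·|z)`
over `(𝒵, P_Z)`, with mixture `p̄_θ := ∫ p_θ(·|z) dP_Z(z)` (realized as `PZ.bind pθ`),
if (i) `p_{θ*}(·|z) = p*` for a.e. `z`, and (ii) `p_θ(·|z) ≪ p̄_θ` with
`dp_θ(·|z)/dp̄_θ ≤ C` `p̄_θ`-a.e. for a.e. `z` and some `C ≥ 1`, then
`I_θ = ∫ KL(p_θ(·|z) ‖ p̄_θ) dP_Z(z) ≤ 4 M_C · sup_z TV(p_θ(·|z), p_{θ*}(·|z))`. -/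
theorem stmt6 {Z Y : Type*} [MeasurableSpace Z] [MeasurableSpace Y]
    (PZ : Measure Z) [IsProbabilityMeasure PZ]
    (pθ pθs : Z → Measure Y) (hθ : Measurable pθ) (hθs : Measurable pθs)
    (hθprob : ∀ z, IsProbabilityMeasure (pθ z))
    (hθsprob : ∀ z, IsProbabilityMeasure (pθs z))
    (pstar : Measure Y) [IsProbabilityMeasure pstar]
    (h1 : ∀ᵐ z ∂PZ, pθs z = pstar)
    (C : ℝ) (hC : 1 ≤ C)
    (h2 : ∀ᵐ z ∂PZ, pθ z ≪ PZ.bind pθ ∧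
        ∀ᵐ y ∂(PZ.bind pθ), (pθ z).rnDeriv (PZ.bind pθ) y ≤ ENNReal.ofReal C) :
    ∫ z, KL (pθ z) (PZ.bind pθ) ∂PZ ≤ 4 * MC C * ⨆ z, TV (pθ z) (pθs z) :=
  stmt6_general PZ pθ pθs hθ hθprob hθsprob pstar h1 C hC h2
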